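/- Let d ≥ 1, p ≥ 1, let g : Fin d → Fin p be a surjective grouping map encoding a partition ω of d, and let n : Fin p → ℕ with n k ≥ 1. Let S^ω be the subspace of ω-partially-symmetric tensors T : (Π i : Fin d, Fin (n (g i))) → ℝ, and let C be the set of all rank-one tensors (including zero) in the full tensor space, i.e., tensors of the form idx ↦ ∏_i (w i)(idx i) with w i ∈ ℝ^{n (g i)}. Then for almost every T ∈ S^ω (with respect to Haar/Lebesgue measure on the subspace S^ω) there exists a tuple y with y j ∈ ℝ^{n (g j)} such that: the rank-one tensor ⊗_j y_j is a best rank one approximation of T (a nearest point to T in C in Hilbert–Schmidt norm), and every best rank one approximation S of T is of the form S(idx) = ∏_j (y (σ j))(idx j) for some permutation σ of Fin d satisfying g ∘ σ = g. -/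

import Mathlib

open MeasureTheory

/-- The space of `d`-mode real tensors with dimensions `n (g i)` in mode `i`,
equipped with the Hilbert–Schmidt (Euclidean) norm. -/
abbrev TensorSpace (d p : ℕ) (g : Fin d → Fin p) (n : Fin p → ℕ) :=
  EuclideanSpace ℝ (∀ i : Fin d, Fin (n (g i)))

/-- The subspace `S^ω` of tensors which are partially symmetric with respect to
the partition of `[d]` encoded by the grouping map `g`. -/
def Somega (d p : ℕ) (g : Fin d → Fin p) (n : Fin p → ℕ) :
    Submodule ℝ (TensorSpace d p g n) where
  carrier := {T | ∀ σ : Equiv.Perm (Fin d), ∀ hσ : ∀ j, g (σ j) = g j,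
    ∀ idx : ∀ i : Fin d, Fin (n (g i)),
      T (fun j => Fin.cast (congrArg n (hσ j)) (idx (σ j))) = T idx}
  add_mem' := by
    intro a b ha hb σ hσ idx
    show a _ + b _ = a idx + b idx
    rw [ha σ hσ idx, hb σ hσ idx]
  zero_mem' := by intro σ hσ idx; rfl
  smul_mem' := by
    intro c a ha σ hσ idx
    show c • a _ = c • a idx
    rw [ha σ hσ idx]

/-- The set of rank one tensors (including zero). -/
def rankOneSet (d p : ℕ) (g : Fin d → Fin p) (n : Fin p → ℕ) :
    Set (TensorSpace d p g n) :=
  {S | ∃ w : ∀ i : Fin d, Fin (n (g i)) → ℝ, ∀ idx, S idx = ∏ i, w i (idx i)}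

/-! The distance to the closed cone `C` of rank one tensors is Lipschitz, hence, by Rademacher's
theorem, differentiable at almost every `T ∈ S^ω`. At such a `T` the squared distance is touched
from above by `‖· - Q‖²` for every nearest point `Q`, so all nearest points have the same inner
product with every element of `S^ω`. Pairing `⊗ⱼ wⱼ` with the partially symmetric tensor
`⊗ⱼ x_{g j}` gives the product of linear forms `∏ⱼ ⟪wⱼ, x_{g j}⟫` in `x`; such products factor
uniquely up to order and scalars, and since `⟪wⱼ, x_{g j}⟫` only involves the block `x_{g j}`,
the reordering respects `g`. -/

open Finset RealInnerProductSpace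

section LinearForms

variable {X : Type*} [NormedAddCommGroup X] [NormedSpace ℝ X]

lemma dense_setOf_apply_ne_zero {ℓ : StrongDual ℝ X} (hℓ : ℓ ≠ 0) : Dense {x | ℓ x ≠ 0} := by
  refine interior_eq_empty_iff_dense_compl.1 (Set.not_nonempty_iff_eq_empty.1 fun h => hℓ ?_)
  exact ContinuousLinearMap.coe_injective
    (LinearMap.ker_eq_top.1 (Submodule.eq_top_of_nonempty_interior' _ h))

lemma dense_setOf_forall_apply_ne_zero {ι : Type*} (s : Finset ι) {ℓ : ι → StrongDual ℝ X}
    (hℓ : ∀ i ∈ s, ℓ i ≠ 0) : Dense {x | ∀ i ∈ s, ℓ i x ≠ 0} := by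
  classical
  induction s using Finset.induction_on with
  | empty => simp
  | insert a t _ ih =>
    simp only [mem_insert, forall_eq_or_imp] at hℓ ⊢
    exact (dense_setOf_apply_ne_zero hℓ.1).inter_of_isOpen_left (ih hℓ.2)
      (isOpen_ne_fun (ℓ a).continuous continuous_const)

lemma exists_forall_apply_ne_zero {ι : Type*} (s : Finset ι) {ℓ : ι → StrongDual ℝ X}
    (hℓ : ∀ i ∈ s, ℓ i ≠ 0) : ∃ x, ∀ i ∈ s, ℓ i x ≠ 0 :=
  (dense_setOf_forall_apply_ne_zero s hℓ).nonempty

/-- Compose the `m i` with the projection `x ↦ x - ℓ₀ x • e` onto `ker ℓ₀`. -/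
lemma exists_apply_eq_zero_forall_apply_ne_zero {ι : Type*} (s : Finset ι)
    {ℓ₀ : StrongDual ℝ X} (hℓ₀ : ℓ₀ ≠ 0) {m : ι → StrongDual ℝ X}
    (hm : ∀ i ∈ s, ∀ c : ℝ, m i ≠ c • ℓ₀) : ∃ x, ℓ₀ x = 0 ∧ ∀ i ∈ s, m i x ≠ 0 := by
  obtain ⟨e, he⟩ : ∃ e, ℓ₀ e = 1 := by
    obtain ⟨e, he⟩ := DFunLike.ne_iff.1 hℓ₀
    exact ⟨(ℓ₀ e)⁻¹ • e, by simp_all⟩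
  let π : X →L[ℝ] X := .id ℝ X - ℓ₀.smulRight e
  have hπ : ∀ x, π x = x - ℓ₀ x • e := fun _ => rfl
  obtain ⟨x, hx⟩ := exists_forall_apply_ne_zero s (ℓ := fun i => (m i).comp π) fun i hi h => by
    refine hm i hi (m i e) (ContinuousLinearMap.ext fun x => ?_)
    have := congr($h x)
    rw [ContinuousLinearMap.comp_apply, hπ, map_sub, map_smul, smul_eq_mul, zero_apply] at this
    rw [smul_apply, smul_eq_mul]
    linear_combination this
  exact ⟨π x, by simp [hπ, he], hx⟩

lemma eq_of_forall_mul_eq_mul {ℓ : StrongDual ℝ X} (hℓ : ℓ ≠ 0) {F G : X → ℝ}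
    (hF : Continuous F) (hG : Continuous G) (h : ∀ x, ℓ x * F x = ℓ x * G x) : F = G :=
  hF.ext_on (dense_setOf_apply_ne_zero hℓ) hG fun x hx => mul_left_cancel₀ hx (h x)

/-- Since `∏ m i` cannot vanish on all of `ker (ℓ a)` unless some `m j₀` is proportional to
`ℓ a`, such a factor exists; cancelling it on the dense set `{ℓ a ≠ 0}` gives the induction. -/
theorem exists_perm_eq_smul_of_prod_eq_mul_prod {ι : Type*} [DecidableEq ι]
    {ℓ : ι → StrongDual ℝ X} (hℓ : ∀ i, ℓ i ≠ 0) (s : Finset ι) :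
    ∀ (m : ι → StrongDual ℝ X) (K : ℝ), (∀ x, ∏ i ∈ s, ℓ i x = K * ∏ i ∈ s, m i x) →
      ∃ τ : Equiv.Perm ι, (∀ i ∉ s, τ i = i) ∧ ∀ i ∈ s, ∃ c : ℝ, m i = c • ℓ (τ i) := by
  induction s using Finset.induction_on with
  | empty => exact fun _ _ _ => ⟨1, by simp⟩
  | insert a t hat ih =>
    intro m K heq
    obtain ⟨j₀, hj₀, c, hc⟩ : ∃ j₀ ∈ insert a t, ∃ c : ℝ, m j₀ = c • ℓ a := by
      by_contra! hm
      obtain ⟨x₀, hx₀⟩ := exists_forall_apply_ne_zero (insert a t) fun i _ => hℓ i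
      have hK : K ≠ 0 := by
        rintro rfl
        simpa [prod_ne_zero_iff.2 hx₀] using heq x₀
      obtain ⟨x, hx, hmx⟩ := exists_apply_eq_zero_forall_apply_ne_zero _ (hℓ a) hm
      exact mul_ne_zero hK (prod_ne_zero_iff.2 hmx)
        (by rw [← heq x, prod_insert hat, hx, zero_mul])
    set σ := Equiv.swap a j₀
    have hσ : {i | σ i ≠ i} ⊆ ↑(insert a t) := fun i hi => by
      by_contra h
      exact hi (Equiv.swap_apply_of_ne_of_ne (by grind) (by grind))
    have hcancel : ∀ x, ∏ i ∈ t, ℓ i x = (K * c) * ∏ i ∈ t, m (σ i) x := by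
      refine congrFun (eq_of_forall_mul_eq_mul (hℓ a) (by fun_prop) (by fun_prop) fun x => ?_)
      have := heq x
      rw [← σ.prod_comp _ (fun i => m i x) hσ, prod_insert hat, prod_insert hat,
        Equiv.swap_apply_left, hc] at this
      simp only [smul_apply, smul_eq_mul] at this
      linear_combination this
    obtain ⟨τ, hτ, hmτ⟩ := ih (fun i => m (σ i)) (K * c) hcancel
    refine ⟨σ.trans τ, fun i hi => ?_, fun i hi => ?_⟩
    · rw [Equiv.trans_apply, Equiv.swap_apply_of_ne_of_ne (by grind) (by grind), hτ i (by grind)]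
    · by_cases hij : i = j₀
      · subst hij
        exact ⟨c, by simp [σ, hτ a hat, hc]⟩
      · have hσi : σ i ∈ t := by grind
        simpa [σ] using hmτ (σ i) hσi

theorem exists_perm_eq_smul_of_prod_eq {ι : Type*} [Fintype ι] [DecidableEq ι]
    {ℓ m : ι → StrongDual ℝ X} (hℓ : ∀ i, ℓ i ≠ 0) (h : ∀ x, ∏ i, ℓ i x = ∏ i, m i x) :
    ∃ (τ : Equiv.Perm ι) (c : ι → ℝ), ∏ i, c i = 1 ∧ ∀ i, m i = c i • ℓ (τ i) := by
  obtain ⟨τ, -, hτ⟩ := exists_perm_eq_smul_of_prod_eq_mul_prod hℓ univ m 1 (by simpa using h)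
  choose c hc using fun i => hτ i (mem_univ i)
  refine ⟨τ, c, ?_, hc⟩
  obtain ⟨x, hx⟩ := exists_forall_apply_ne_zero univ fun i _ => hℓ i
  have hx' : ∏ i, ℓ i x ≠ 0 := prod_ne_zero_iff.2 hx
  have := h x
  simp only [hc, smul_apply, smul_eq_mul, prod_mul_distrib,
    Equiv.prod_comp τ (fun i => ℓ i x)] at this
  exact mul_right_cancel₀ hx' (by linear_combination -this)

end LinearForms

section BlockForm

variable {κ : Type*} {n : κ → ℕ}

def blockForm {k : κ} (v : Fin (n k) → ℝ) : StrongDual ℝ (∀ k, Fin (n k) → ℝ) :=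
  ∑ b, v b • (ContinuousLinearMap.proj (R := ℝ) (φ := fun _ : Fin (n k) => ℝ) b).comp
    (ContinuousLinearMap.proj (φ := fun k => Fin (n k) → ℝ) k)

@[simp]
lemma blockForm_apply {k : κ} (v : Fin (n k) → ℝ) (x : ∀ k, Fin (n k) → ℝ) :
    blockForm v x = v ⬝ᵥ x k := by
  simp [blockForm, dotProduct]

lemma blockForm_ne_zero [DecidableEq κ] {k : κ} {v : Fin (n k) → ℝ} (hv : v ≠ 0) :
    blockForm v ≠ 0 := by
  obtain ⟨b, hb⟩ := Function.ne_iff.1 hv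
  intro h
  exact hb (by simpa using congr($h (Pi.single k (Pi.single b 1))))

lemma blockForm_eq_smul [DecidableEq κ] {k k' : κ} {v : Fin (n k) → ℝ} {v' : Fin (n k') → ℝ}
    {c : ℝ} (hc : c ≠ 0) (hv' : v' ≠ 0) (h : blockForm v = c • blockForm v') :
    ∃ hk : k' = k, ∀ b, v b = c * v' (Fin.cast (congrArg n hk).symm b) := by
  obtain rfl : k' = k := by
    by_contra hk
    obtain ⟨b, hb⟩ := Function.ne_iff.1 hv'
    exact hb (by
      simpa [hc, Pi.single_eq_of_ne' hk] using congr($h (Pi.single k' (Pi.single b 1))))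
  exact ⟨rfl, fun b => by simpa using congr($h (Pi.single k' (Pi.single b 1)))⟩

lemma exists_perm_of_prod_blockForm_eq [Fintype κ] [DecidableEq κ] {ι : Type*}
    [Fintype ι] [DecidableEq ι] {g : ι → κ} {u w : ∀ j, Fin (n (g j)) → ℝ}
    (h : ∀ x, ∏ j, blockForm (u j) x = ∏ j, blockForm (w j) x) :
    ∃ σ : Equiv.Perm ι, ∃ hσ : ∀ j, g (σ j) = g j, ∀ idx : ∀ j, Fin (n (g j)),
      ∏ j, w j (idx j) = ∏ j, u (σ j) (Fin.cast (congrArg n (hσ j)).symm (idx j)) := by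
  by_cases hu : ∀ j, u j ≠ 0
  · obtain ⟨τ, c, hc, hwc⟩ :=
      exists_perm_eq_smul_of_prod_eq (fun j => blockForm_ne_zero (hu j)) h
    have hc0 : ∀ j, c j ≠ 0 := fun j hj => by simp [prod_eq_zero (mem_univ j) hj] at hc
    choose hσ hw using fun j => blockForm_eq_smul (hc0 j) (hu (τ j)) (hwc j)
    refine ⟨τ, hσ, fun idx => ?_⟩
    simp only [hw, prod_mul_distrib, hc, one_mul]
  · obtain ⟨j₀, hj₀⟩ : ∃ j₀, u j₀ = 0 := by simpa using hu
    obtain ⟨j₁, hj₁⟩ : ∃ j₁, w j₁ = 0 := by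
      by_contra! hw
      obtain ⟨x, hx⟩ := exists_forall_apply_ne_zero univ fun j _ => blockForm_ne_zero (hw j)
      exact prod_ne_zero_iff.2 hx (by rw [← h x, prod_eq_zero (mem_univ j₀) (by simp [hj₀])])
    refine ⟨1, fun _ => rfl, fun idx => ?_⟩
    rw [prod_eq_zero (mem_univ j₁) (by simp [hj₁]), prod_eq_zero (mem_univ j₀) (by simp [hj₀])]

end BlockForm

section Tensors

variable {d p : ℕ} {g : Fin d → Fin p} {n : Fin p → ℕ}

def symmetricRankOne (x : ∀ k, Fin (n k) → ℝ) : TensorSpace d p g n :=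
  WithLp.toLp 2 fun idx => ∏ j, x (g j) (idx j)

lemma symmetricRankOne_mem_Somega (x : ∀ k, Fin (n k) → ℝ) :
    symmetricRankOne x ∈ Somega d p g n := by
  intro σ hσ idx
  have hcast : ∀ {k k'} (h : k' = k) (b : Fin (n k')),
      x k (Fin.cast (congrArg n h) b) = x k' b := by
    rintro _ _ rfl _
    rfl
  exact (prod_congr rfl fun j _ => hcast (hσ j) _).trans
    (Equiv.prod_comp σ fun j => x (g j) (idx j))

lemma inner_symmetricRankOne {S : TensorSpace d p g n} {w : ∀ j, Fin (n (g j)) → ℝ}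
    (hS : ∀ idx, S idx = ∏ j, w j (idx j)) (x : ∀ k, Fin (n k) → ℝ) :
    ⟪S, symmetricRankOne x⟫ = ∏ j, blockForm (w j) x := by
  simp only [PiLp.inner_apply, symmetricRankOne, blockForm_apply, dotProduct, Fintype.prod_sum]
  refine sum_congr rfl fun idx _ => ?_
  simp [hS, prod_mul_distrib, mul_comm]

end Tensors

section RankOneSet

lemma prod_apply_update_eq_mul_prod_erase {ι : Type*} [Fintype ι] [DecidableEq ι]
    {β : ι → Type*} {R : Type*} [CommMonoid R] (F : ∀ i, β i → R) (x : ∀ i, β i) (i : ι)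
    (b : β i) : ∏ j, F j (Function.update x i b j) = F i b * ∏ j ∈ univ.erase i, F j (x j) := by
  rw [← mul_prod_erase univ _ (mem_univ i), Function.update_self]
  exact congrArg _ (prod_congr rfl fun j hj => by rw [Function.update_of_ne (ne_of_mem_erase hj)])

lemma prod_prod_erase_eq_pow {ι : Type*} [Fintype ι] [DecidableEq ι] {R : Type*}
    [CommMonoid R] (a : ι → R) :
    ∏ i, ∏ j ∈ univ.erase i, a j = (∏ i, a i) ^ (Fintype.card ι - 1) := by
  rw [prod_comm' (t' := univ) (s' := fun j => univ.erase j) (by simp [ne_comm])]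
  simp [card_erase_of_mem, prod_pow]

variable {d p : ℕ} {g : Fin d → Fin p} {n : Fin p → ℕ}

lemma rankOneSet_nonempty : (rankOneSet d p g n).Nonempty :=
  ⟨WithLp.toLp 2 fun _ => 1, fun _ _ => 1, by simp⟩

lemma smul_mem_rankOneSet (hd : 1 ≤ d) (c : ℝ) {S : TensorSpace d p g n}
    (hS : S ∈ rankOneSet d p g n) : c • S ∈ rankOneSet d p g n := by
  obtain ⟨w, hw⟩ := hS
  let i₀ : Fin d := ⟨0, hd⟩
  refine ⟨Function.update w i₀ (c • w i₀), fun idx => ?_⟩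
  have := prod_apply_update_eq_mul_prod_erase (fun i (v : Fin (n (g i)) → ℝ) => v (idx i)) w i₀
    (c • w i₀)
  simp only [Pi.smul_apply, smul_eq_mul] at this
  rw [this, PiLp.smul_apply, hw, ← mul_prod_erase univ _ (mem_univ i₀), smul_eq_mul, mul_assoc]

lemma mem_rankOneSet_iff (hd : 1 ≤ d) {S : TensorSpace d p g n} :
    S ∈ rankOneSet d p g n ↔
      ∀ I idx, S idx * S I ^ (d - 1) = ∏ i, S (Function.update I i (idx i)) := by
  constructor
  · rintro ⟨w, hw⟩ I idx
    simp only [hw, prod_apply_update_eq_mul_prod_erase, prod_mul_distrib, prod_prod_erase_eq_pow,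
      Fintype.card_fin]
  · intro h
    by_cases hS : ∀ I, S I = 0
    · obtain rfl : S = 0 := by
        ext idx
        exact hS idx
      simpa using smul_mem_rankOneSet hd 0 rankOneSet_nonempty.some_mem
    · obtain ⟨I, hI⟩ := not_forall.1 hS
      have hST : S = (S I ^ (d - 1))⁻¹ •
          WithLp.toLp 2 fun idx => ∏ i, S (Function.update I i (idx i)) := by
        ext idx
        simp only [PiLp.smul_apply, ← h I idx, smul_eq_mul]
        field_simp
      rw [hST]
      exact smul_mem_rankOneSet hd _ ⟨fun i b => S (Function.update I i b), fun _ => rfl⟩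

lemma isClosed_rankOneSet (hd : 1 ≤ d) : IsClosed (rankOneSet d p g n) := by
  rw [show rankOneSet d p g n = {S | ∀ I idx, S idx * S I ^ (d - 1) =
      ∏ i, S (Function.update I i (idx i))} from Set.ext fun S => mem_rankOneSet_iff hd]
  simp only [Set.ofPred_forall]
  exact isClosed_iInter fun I => isClosed_iInter fun idx =>
    isClosed_eq (by fun_prop) (by fun_prop)

end RankOneSet

section NearestPoint

lemma HasFDerivAt.eq_of_le {F : Type*} [NormedAddCommGroup F] [NormedSpace ℝ F]
    {f g : F → ℝ} {f' g' : StrongDual ℝ F} {a : F} (hf : HasFDerivAt f f' a)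
    (hg : HasFDerivAt g g' a) (hle : f ≤ g) (ha : f a = g a) : f' = g' := by
  have hmin : IsLocalMin (g - f) a := Filter.Eventually.of_forall fun x => by
    simpa [ha] using hle x
  exact (sub_eq_zero.1 (hmin.hasFDerivAt_eq_zero (hg.sub hf))).symm

variable {E : Type*} [NormedAddCommGroup E] [InnerProductSpace ℝ E]

lemma hasFDerivAt_infDist_sq_of_dist_eq (K : Submodule ℝ E) {C : Set E} {T : K}
    (hT : DifferentiableAt ℝ (fun x : K => Metric.infDist (x : E) C) T) {Q : E} (hQ : Q ∈ C)
    (hTQ : dist (T : E) Q = Metric.infDist (T : E) C) :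
    HasFDerivAt (fun x : K => Metric.infDist (x : E) C ^ 2)
      (2 • (innerSL ℝ ((T : E) - Q)).comp K.subtypeL) T := by
  have hnorm := (K.subtypeL.hasFDerivAt (x := T)).sub_const Q |>.norm_sq
  have hinf := (hT.pow 2).hasFDerivAt
  rwa [hinf.eq_of_le hnorm (fun x => ?_) (by simp [← hTQ, dist_eq_norm])] at hinf
  exact pow_le_pow_left₀ Metric.infDist_nonneg
    ((Metric.infDist_le_dist_of_mem hQ).trans_eq (dist_eq_norm _ _)) 2

lemma inner_eq_of_dist_eq_infDist (K : Submodule ℝ E) {C : Set E} {T : K}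
    (hT : DifferentiableAt ℝ (fun x : K => Metric.infDist (x : E) C) T) {P Q : E}
    (hP : P ∈ C) (hQ : Q ∈ C) (hTP : dist (T : E) P = Metric.infDist (T : E) C)
    (hTQ : dist (T : E) Q = Metric.infDist (T : E) C) (h : K) : ⟪P, h⟫ = ⟪Q, h⟫ := by
  have := congr($((hasFDerivAt_infDist_sq_of_dist_eq K hT hP hTP).unique
    (hasFDerivAt_infDist_sq_of_dist_eq K hT hQ hTQ)) h)
  simpa using this

end NearestPoint

theorem ae_best_rank_one_approx_up_to_symmetry_general
    (d p : ℕ) (hd : 1 ≤ d) (g : Fin d → Fin p)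
    (n : Fin p → ℕ)
    (μ : Measure (Somega d p g n)) [μ.IsAddHaarMeasure] :
    ∀ᵐ (T : Somega d p g n) ∂μ, ∃ y : ∀ j : Fin d, Fin (n (g j)) → ℝ,
      (∃ Y ∈ rankOneSet d p g n, (∀ idx, Y idx = ∏ j, y j (idx j)) ∧
        dist (T : TensorSpace d p g n) Y =
          Metric.infDist (T : TensorSpace d p g n) (rankOneSet d p g n)) ∧
      ∀ S ∈ rankOneSet d p g n,
        dist (T : TensorSpace d p g n) S =
            Metric.infDist (T : TensorSpace d p g n) (rankOneSet d p g n) →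
          ∃ σ : Equiv.Perm (Fin d), ∃ hσ : ∀ j, g (σ j) = g j,
            ∀ idx : ∀ i : Fin d, Fin (n (g i)),
              S idx = ∏ j, y (σ j) (Fin.cast (congrArg n (hσ j)).symm (idx j)) := by
  have hlip : LipschitzWith 1 fun x : Somega d p g n =>
      Metric.infDist (x : TensorSpace d p g n) (rankOneSet d p g n) :=
    ((Metric.lipschitz_infDist_pt _).comp (LipschitzWith.subtype_val _)).weaken (by simp)
  filter_upwards [hlip.ae_differentiableAt] with T hT
  obtain ⟨P, hP, hTP⟩ :=
    (isClosed_rankOneSet hd).exists_infDist_eq_dist rankOneSet_nonempty (T : TensorSpace d p g n)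
  have ⟨y, hy⟩ := hP
  refine ⟨y, ⟨P, hP, hy, hTP.symm⟩, fun S hS hTS => ?_⟩
  have ⟨w, hw⟩ := hS
  have hpair : ∀ x, ∏ j, blockForm (y j) x = ∏ j, blockForm (w j) x := fun x => by
    rw [← inner_symmetricRankOne hy, ← inner_symmetricRankOne hw]
    exact inner_eq_of_dist_eq_infDist _ hT hP hS hTP.symm hTS ⟨_, symmetricRankOne_mem_Somega x⟩
  obtain ⟨σ, hσ, hprod⟩ := exists_perm_of_prod_blockForm_eq hpair
  exact ⟨σ, hσ, fun idx => (hw idx).trans (hprod idx)⟩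

/-- For almost every `ω`-partially-symmetric tensor `T` there is a tuple `y`
such that `⊗ⱼ yⱼ` is a best rank one approximation of `T` and every best rank
one approximation of `T` is obtained from `y` by a permutation `σ` of the
factors with `g ∘ σ = g`. -/
theorem ae_best_rank_one_approx_up_to_symmetry
    (d p : ℕ) (hd : 1 ≤ d) (hp : 1 ≤ p) (g : Fin d → Fin p)
    (hg : Function.Surjective g) (n : Fin p → ℕ) (hn : ∀ k, 1 ≤ n k)
    (μ : Measure (Somega d p g n)) [μ.IsAddHaarMeasure] :
    ∀ᵐ (T : Somega d p g n) ∂μ, ∃ y : ∀ j : Fin d, Fin (n (g j)) → ℝ,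
      (∃ Y ∈ rankOneSet d p g n, (∀ idx, Y idx = ∏ j, y j (idx j)) ∧
        dist (T : TensorSpace d p g n) Y =
          Metric.infDist (T : TensorSpace d p g n) (rankOneSet d p g n)) ∧
      ∀ S ∈ rankOneSet d p g n,
        dist (T : TensorSpace d p g n) S =
            Metric.infDist (T : TensorSpace d p g n) (rankOneSet d p g n) →
          ∃ σ : Equiv.Perm (Fin d), ∃ hσ : ∀ j, g (σ j) = g j,
            ∀ idx : ∀ i : Fin d, Fin (n (g i)),
              S idx = ∏ j, y (σ j) (Fin.cast (congrArg n (hσ j)).symm (idx j)) :=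
  ae_best_rank_one_approx_up_to_symmetry_general d p hd g n μ
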